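/- arXiv:2006.14387 — 4 statements merged into one kernel-verified Lean document; each statement's English description precedes it below -/
import Mathlib

section
/- Let a, b, c, d > 0 and let 2 < p < p̄ < q ≤ 2*, 2 < r < 2*, with exponents γ_s = N(s-2)/(2s) for s ∈ {p,q,r} (and γ_{2*}=1), where p̄ = 2+4/N and N ≥ 3. Then the function l(t) = a t² − b t^{rγ_r} − c t^{pγ_p} − d t^{qγ_q} has at most two critical points on (0, ∞). -/
/-!
Substituting `t = exp x`, a critical point `t > 0` of `l` is exactly a solution of
`F x = 2 a`, where `F x = b R e^{(R-2)x} + c P e^{(P-2)x} + d K e^{(K-2)x}` and `R, P, K` are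
the exponents `r γ_r, p γ_p, q γ_q`: indeed `l'(t) = t (2a - F (log t))`. All three terms of `F`
are convex and the last one is strictly convex since `K = q γ_q > 2`, so `F` is strictly convex
and takes any value at most twice.
-/

open Real Set

theorem encard_le_two_of_not_lt_lt {α : Type*} [LinearOrder α] {S : Set α}
    (h : ∀ x ∈ S, ∀ y ∈ S, ∀ z ∈ S, x < y → ¬ y < z) : S.encard ≤ 2 := by
  by_contra! hS
  obtain ⟨T, hTS, hT⟩ := exists_subset_encard_eq (Order.add_one_le_of_lt hS)
  obtain ⟨u, rfl⟩ := (finite_of_encard_eq_coe hT).exists_finset_coe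
  have hu : u.card = 3 := by exact_mod_cast hT
  set e := u.orderEmbOfFin hu
  have mem (i : Fin 3) : e i ∈ S := hTS (u.orderEmbOfFin_mem hu i)
  exact h _ (mem 0) _ (mem 1) _ (mem 2) (e.strictMono (by decide)) (e.strictMono (by decide))

theorem StrictConvexOn.encard_inter_preimage_singleton_le_two {s : Set ℝ} {f : ℝ → ℝ}
    (hf : StrictConvexOn ℝ s f) (v : ℝ) : (s ∩ f ⁻¹' {v}).encard ≤ 2 := by
  refine encard_le_two_of_not_lt_lt fun x ⟨hxs, hx⟩ y ⟨_, hy⟩ z ⟨hzs, hz⟩ hxy hyz => ?_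
  have := hf.lt_on_openSegment hxs hzs (hxy.trans hyz).ne
    (Ioo_subset_openSegment ⟨hxy, hyz⟩)
  simp_all

theorem convexOn_const_mul_exp_mul {C : ℝ} (hC : 0 ≤ C) (l : ℝ) :
    ConvexOn ℝ univ (fun x => C * exp (l * x)) := by
  simpa [Function.comp_def] using (convexOn_exp.comp_linearMap (LinearMap.lsmul ℝ ℝ l)).smul hC

theorem strictConvexOn_const_mul_exp_mul {C l : ℝ} (hC : 0 < C) (hl : l ≠ 0) :
    StrictConvexOn ℝ univ (fun x => C * exp (l * x)) := by
  refine ⟨convex_univ, fun x _ y _ hxy a b ha hb hab => ?_⟩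
  have h := strictConvexOn_exp.2 (mem_univ (l * x)) (mem_univ (l * y))
    ((mul_right_injective₀ hl).ne hxy) ha hb hab
  simp only [smul_eq_mul] at h ⊢
  calc C * exp (l * (a * x + b * y)) = C * exp (a * (l * x) + b * (l * y)) := by ring_nf
    _ < C * (a * exp (l * x) + b * exp (l * y)) := by gcongr
    _ = a * (C * exp (l * x)) + b * (C * exp (l * y)) := by ring

theorem hasDerivAt_const_mul_rpow_of_pos (C s : ℝ) {t : ℝ} (ht : 0 < t) :
    HasDerivAt (fun t => C * t ^ s) (t * (C * s * exp ((s - 2) * log t))) t := by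
  refine ((hasDerivAt_rpow_const (p := s) (Or.inl ht.ne')).const_mul C).congr_deriv ?_
  rw [rpow_def_of_pos ht, show log t * (s - 1) = log t + (s - 2) * log t by ring, exp_add,
    exp_log ht]
  ring

theorem encard_setOf_deriv_eq_zero_le_two {a b c d R P K : ℝ} (hb : 0 ≤ b) (hc : 0 ≤ c)
    (hd : 0 < d) (hR : 0 ≤ R) (hP : 0 ≤ P) (hK : 0 < K) (hK2 : K ≠ 2) :
    {t : ℝ | 0 < t ∧
      deriv (fun t => a * t ^ (2 : ℝ) - b * t ^ R - c * t ^ P - d * t ^ K) t = 0}.encard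
      ≤ 2 := by
  set F : ℝ → ℝ := fun x =>
    b * R * exp ((R - 2) * x) + c * P * exp ((P - 2) * x) + d * K * exp ((K - 2) * x)
  have hF : StrictConvexOn ℝ univ F :=
    ((convexOn_const_mul_exp_mul (by positivity) _).add
      (convexOn_const_mul_exp_mul (by positivity) _)).add_strictConvexOn
      (strictConvexOn_const_mul_exp_mul (by positivity) (sub_ne_zero.2 hK2))
  have hcrit : {t : ℝ | 0 < t ∧
      deriv (fun t => a * t ^ (2 : ℝ) - b * t ^ R - c * t ^ P - d * t ^ K) t = 0} ⊆
      exp '' (univ ∩ F ⁻¹' {2 * a}) := by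
    rintro t ⟨ht, hderiv⟩
    refine ⟨log t, ⟨mem_univ _, ?_⟩, exp_log ht⟩
    have hl' : HasDerivAt (fun t => a * t ^ (2 : ℝ) - b * t ^ R - c * t ^ P - d * t ^ K) _ t :=
      (((hasDerivAt_const_mul_rpow_of_pos a 2 ht).sub
      (hasDerivAt_const_mul_rpow_of_pos b R ht)).sub
      (hasDerivAt_const_mul_rpow_of_pos c P ht)).sub (hasDerivAt_const_mul_rpow_of_pos d K ht)
    rw [hl'.deriv] at hderiv
    have hfactor : t * (2 * a - F (log t)) = 0 := by
      simp only [F]; norm_num at hderiv; linear_combination hderiv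
    exact (sub_eq_zero.1 ((mul_eq_zero.1 hfactor).resolve_left ht.ne')).symm
  calc _ ≤ (exp '' (univ ∩ F ⁻¹' {2 * a})).encard := encard_le_encard hcrit
    _ ≤ (univ ∩ F ⁻¹' {2 * a}).encard := encard_image_le _ _
    _ ≤ 2 := hF.encard_inter_preimage_singleton_le_two _

theorem stmt_1_general (N : ℕ) (hN : 3 ≤ N) (a b c d p q r γp γq γr : ℝ)
    (hb : 0 < b) (hc : 0 < c) (hd : 0 < d)
    (hp1 : 2 < p)
    (hq1 : 2 + 4 / N < q)
    (hr1 : 2 < r)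
    (hγp : γp = (N : ℝ) * (p - 2) / (2 * p))
    (hγq : γq = (N : ℝ) * (q - 2) / (2 * q))
    (hγr : γr = (N : ℝ) * (r - 2) / (2 * r)) :
    Set.encard {t : ℝ | 0 < t ∧
      deriv (fun t : ℝ => a * t ^ (2 : ℝ) - b * t ^ (r * γr)
        - c * t ^ (p * γp) - d * t ^ (q * γq)) t = 0} ≤ 2 := by
  have hN0 : (0 : ℝ) < N := Nat.cast_pos.2 (by omega)
  have hsγ (s : ℝ) (hs : 2 < s) : s * ((N : ℝ) * (s - 2) / (2 * s)) = N * (s - 2) / 2 := by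
    field_simp [(by linarith : s ≠ 0)]
  have hK : 2 < q * γq := by
    have : 4 < (q - 2) * N := (div_lt_iff₀ hN0).1 (by linarith)
    rw [hγq, hsγ q (by linarith [div_pos four_pos hN0])]
    linarith
  refine encard_setOf_deriv_eq_zero_le_two hb.le hc.le hd ?_ ?_ (by linarith) hK.ne'
  · rw [hγr, hsγ r hr1]; nlinarith
  · rw [hγp, hsγ p hp1]; nlinarith

theorem stmt_1 (N : ℕ) (hN : 3 ≤ N) (a b c d p q r γp γq γr : ℝ)
    (ha : 0 < a) (hb : 0 < b) (hc : 0 < c) (hd : 0 < d)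
    (hp1 : 2 < p) (hpbar : p < 2 + 4 / N)
    (hq1 : 2 + 4 / N < q) (hq2 : q ≤ 2 * N / ((N : ℝ) - 2))
    (hr1 : 2 < r) (hr2 : r < 2 * N / ((N : ℝ) - 2))
    (hγp : γp = (N : ℝ) * (p - 2) / (2 * p))
    (hγq : γq = (N : ℝ) * (q - 2) / (2 * q))
    (hγr : γr = (N : ℝ) * (r - 2) / (2 * r)) :
    Set.encard {t : ℝ | 0 < t ∧
      deriv (fun t : ℝ => a * t ^ (2 : ℝ) - b * t ^ (r * γr)
        - c * t ^ (p * γp) - d * t ^ (q * γq)) t = 0} ≤ 2 :=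
  stmt_1_general N hN a b c d p q r γp γq γr hb hc hd hp1 hq1 hr1 hγp hγq hγr
end

section
/- Let N ≥ 3, a, c, d > 0 and exponents α, β with 0 < α < 2 < β. Then the function l(t) = a t² − c t^α − d t^β on (0, ∞) satisfies: l(0+) = 0⁻ (l is negative near 0), l(+∞) = −∞, and l has at most two critical points on (0, ∞); moreover if l attains a positive value somewhere, then l has exactly two critical points: a local minimum at negative level and a global maximum at positive level. -/
/-!
Write `l t = a t² - c t^α - d t^β`. For `t > 0`, `l' t = t (2a - g t)` with
`g t = c α t^(α-2) + d β t^(β-2)`. The derivative of `g` has the sign of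
`d β (β-2) t^(β-α) - c α (2-α)`, so `g` strictly decreases and then strictly increases, and it
tends to `+∞` at both ends of `(0, ∞)`; hence `g = 2a` has at most two solutions. If `l` takes a
positive value, then `min g < 2a` (otherwise `l` would be antitone and negative near `0`), so
there are exactly two solutions `t₁ < t₂`, and `l` decreases on `(0, t₁]`, increases on
`[t₁, t₂]` and decreases on `[t₂, ∞)`.
-/

open Real Filter Set Topology

lemma encard_sep_eq_le_two_of_strictAnti_strictMono {g : ℝ → ℝ} {a b k : ℝ}
    (h₀ : StrictAntiOn g (Ioc a b)) (h₁ : StrictMonoOn g (Ici b)) :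
    {t ∈ Ioi a | g t = k}.encard ≤ 2 := by
  have hsplit : {t ∈ Ioi a | g t = k} ⊆ {t ∈ Ioc a b | g t = k} ∪ {t ∈ Ici b | g t = k} := by
    rintro t ⟨ht, hgt⟩
    rcases le_total t b with h | h
    exacts [Or.inl ⟨⟨ht, h⟩, hgt⟩, Or.inr ⟨h, hgt⟩]
  calc {t ∈ Ioi a | g t = k}.encard
      ≤ {t ∈ Ioc a b | g t = k}.encard + {t ∈ Ici b | g t = k}.encard :=
        (encard_mono hsplit).trans (encard_union_le _ _)
    _ ≤ 1 + 1 := by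
        gcongr <;> refine encard_le_one_iff.2 fun x y hx hy => ?_
        exacts [h₀.injOn hx.1 hy.1 (hx.2.trans hy.2.symm),
          h₁.injOn hx.1 hy.1 (hx.2.trans hy.2.symm)]
    _ = 2 := by norm_num

lemma exists_mem_Ioo_eq_of_tendsto_nhdsGT {g : ℝ → ℝ} {a b k : ℝ} (hab : a < b)
    (hg : ContinuousOn g (Ioc a b)) (h : Tendsto g (𝓝[>] a) atTop) (hk : g b < k) :
    ∃ t ∈ Ioo a b, g t = k := by
  obtain ⟨u, hku, hu⟩ := ((h.eventually_gt_atTop k).and (Ioo_mem_nhdsGT hab)).exists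
  obtain ⟨t, ht, hgt⟩ :=
    intermediate_value_Ioo' hu.2.le (hg.mono (Icc_subset_Ioc hu.1 le_rfl)) ⟨hk, hku⟩
  exact ⟨t, ⟨hu.1.trans ht.1, ht.2⟩, hgt⟩

lemma exists_gt_eq_of_tendsto_atTop {g : ℝ → ℝ} {b k : ℝ} (hg : ContinuousOn g (Ici b))
    (h : Tendsto g atTop atTop) (hk : g b < k) : ∃ t, b < t ∧ g t = k := by
  obtain ⟨v, hkv, hv⟩ := ((h.eventually_gt_atTop k).and (eventually_gt_atTop b)).exists
  obtain ⟨t, ht, hgt⟩ := intermediate_value_Ioo hv.le (hg.mono Icc_subset_Ici_self) ⟨hk, hkv⟩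
  exact ⟨t, ht.1, hgt⟩

lemma AntitoneOn.lt_of_eventually_lt_nhdsGT {f : ℝ → ℝ} {a b t y : ℝ}
    (hf : AntitoneOn f (Ioc a b)) (h : ∀ᶠ x in 𝓝[>] a, f x < y) (ht : t ∈ Ioc a b) : f t < y := by
  obtain ⟨u, hfu, hu⟩ := (h.and (Ioc_mem_nhdsGT ht.1)).exists
  exact (hf ⟨hu.1, hu.2.trans ht.2⟩ ht hu.2).trans_lt hfu

noncomputable def fiber (a c d α β : ℝ) (t : ℝ) : ℝ := a * t ^ (2 : ℝ) - c * t ^ α - d * t ^ β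

noncomputable def fiberSlope (c d α β : ℝ) (t : ℝ) : ℝ :=
  c * α * t ^ (α - 2) + d * β * t ^ (β - 2)

section

variable {a c d α β : ℝ}

lemma hasDerivAt_fiber {t : ℝ} (ht : 0 < t) :
    HasDerivAt (fiber a c d α β) (t * (2 * a - fiberSlope c d α β t)) t := by
  have H := (((hasDerivAt_rpow_const (p := 2) (Or.inl ht.ne')).const_mul a).sub
    ((hasDerivAt_rpow_const (p := α) (Or.inl ht.ne')).const_mul c)).sub
    ((hasDerivAt_rpow_const (p := β) (Or.inl ht.ne')).const_mul d)
  refine H.congr_deriv ?_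
  have hsub : ∀ p : ℝ, t ^ (p - 1) = t ^ (p - 2) * t := fun p => by
    rw [← rpow_add_one ht.ne']; ring_nf
  rw [hsub α, hsub β, show (2 : ℝ) - 1 = 1 by norm_num, rpow_one, fiberSlope]
  ring

lemma continuousOn_fiber : ContinuousOn (fiber a c d α β) (Ioi 0) :=
  fun _ ht => (hasDerivAt_fiber ht).continuousAt.continuousWithinAt

lemma hasDerivAt_fiberSlope {t : ℝ} (ht : 0 < t) :
    HasDerivAt (fiberSlope c d α β)
      (t ^ (α - 3) * (d * β * (β - 2) * t ^ (β - α) - c * α * (2 - α))) t := by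
  have H := ((hasDerivAt_rpow_const (p := α - 2) (Or.inl ht.ne')).const_mul (c * α)).add
    ((hasDerivAt_rpow_const (p := β - 2) (Or.inl ht.ne')).const_mul (d * β))
  refine H.congr_deriv ?_
  rw [show α - 2 - 1 = α - 3 by ring, show β - 2 - 1 = (α - 3) + (β - α) by ring, rpow_add ht]
  ring

lemma continuousOn_fiberSlope : ContinuousOn (fiberSlope c d α β) (Ioi 0) :=
  fun _ ht => (hasDerivAt_fiberSlope ht).continuousAt.continuousWithinAt

lemma exists_strictAntiOn_strictMonoOn_fiberSlope (hc : 0 < c) (hd : 0 < d) (hα0 : 0 < α)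
    (hα2 : α < 2) (hβ : 2 < β) :
    ∃ t₀ > 0, StrictAntiOn (fiberSlope c d α β) (Ioc 0 t₀) ∧
      StrictMonoOn (fiberSlope c d α β) (Ici t₀) := by
  have hK : 0 < d * β * (β - 2) := by have := sub_pos.2 hβ; positivity
  have hαβ : 0 < β - α := by linarith
  have hM : 0 < c * α * (2 - α) / (d * β * (β - 2)) := by have := sub_pos.2 hα2; positivity
  set t₀ := (c * α * (2 - α) / (d * β * (β - 2))) ^ (β - α)⁻¹
  have ht₀ : 0 < t₀ := rpow_pos_of_pos hM _
  -- `t₀` is the unique zero of the bracket in `hasDerivAt_fiberSlope`.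
  have hderiv : ∀ t, 0 < t → HasDerivAt (fiberSlope c d α β)
      (t ^ (α - 3) * (d * β * (β - 2) * (t ^ (β - α) - t₀ ^ (β - α)))) t := fun t ht => by
    convert hasDerivAt_fiberSlope ht using 2
    rw [rpow_inv_rpow hM.le hαβ.ne', mul_sub, mul_div_cancel₀ _ hK.ne']
  refine ⟨t₀, ht₀, strictAntiOn_of_hasDerivWithinAt_neg (convex_Ioc 0 t₀)
      (continuousOn_fiberSlope.mono Ioc_subset_Ioi_self)
      (fun t ht => (hderiv t (interior_subset ht).1).hasDerivWithinAt) fun t ht => ?_,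
    strictMonoOn_of_hasDerivWithinAt_pos (convex_Ici t₀)
      (continuousOn_fiberSlope.mono (Ici_subset_Ioi.2 ht₀))
      (fun t ht => (hderiv t (ht₀.trans_le (interior_subset ht))).hasDerivWithinAt)
      fun t ht => ?_⟩
  · rw [interior_Ioc] at ht
    exact mul_neg_of_pos_of_neg (rpow_pos_of_pos ht.1 _)
      (mul_neg_of_pos_of_neg hK (sub_neg.2 (rpow_lt_rpow ht.1.le ht.2 hαβ)))
  · rw [interior_Ici] at ht
    have ht' : 0 < t := ht₀.trans ht
    exact mul_pos (rpow_pos_of_pos ht' _)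
      (mul_pos hK (sub_pos.2 (rpow_lt_rpow ht₀.le ht hαβ)))

lemma tendsto_fiberSlope_nhdsGT_zero (hc : 0 < c) (hd : 0 < d) (hα0 : 0 < α) (hα2 : α < 2)
    (hβ : 2 < β) : Tendsto (fiberSlope c d α β) (𝓝[>] 0) atTop := by
  refine tendsto_atTop_mono' _ ?_
    ((tendsto_rpow_neg_nhdsGT_zero (sub_neg.2 hα2)).const_mul_atTop (mul_pos hc hα0))
  filter_upwards [self_mem_nhdsWithin] with t ht
  have : 0 ≤ d * β * t ^ (β - 2) := by have := rpow_pos_of_pos ht (β - 2); positivity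
  exact le_add_of_nonneg_right this

lemma tendsto_fiberSlope_atTop (hc : 0 < c) (hd : 0 < d) (hα0 : 0 < α) (hβ : 2 < β) :
    Tendsto (fiberSlope c d α β) atTop atTop := by
  refine tendsto_atTop_mono' _ ?_
    ((tendsto_rpow_atTop (sub_pos.2 hβ)).const_mul_atTop (mul_pos hd (by linarith)))
  filter_upwards [eventually_gt_atTop 0] with t ht
  have : 0 ≤ c * α * t ^ (α - 2) := by have := rpow_pos_of_pos ht (α - 2); positivity
  exact le_add_of_nonneg_left this

lemma fiber_eventually_neg (hc : 0 < c) (hd : 0 < d) (hα2 : α < 2) :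
    ∀ᶠ t in 𝓝[>] 0, fiber a c d α β t < 0 := by
  have hα2' : 0 < 2 - α := sub_pos.2 hα2
  have hlim : Tendsto (fun t : ℝ => a * t ^ (2 - α)) (𝓝[>] 0) (𝓝 0) := by
    simpa [zero_rpow hα2'.ne'] using
      ((continuousAt_rpow_const 0 (2 - α) (Or.inr hα2'.le)).const_mul a).tendsto.mono_left
        nhdsWithin_le_nhds
  filter_upwards [hlim.eventually_lt_const hc, self_mem_nhdsWithin] with t hsmall ht
  -- `a t² - c t^α = t^α (a t^(2-α) - c)` and the bracket tends to `-c`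
  have hsplit : t ^ (2 : ℝ) = t ^ α * t ^ (2 - α) := by rw [← rpow_add ht]; ring_nf
  have hα : 0 < t ^ α := rpow_pos_of_pos ht α
  have hβ : 0 < d * t ^ β := mul_pos hd (rpow_pos_of_pos ht β)
  rw [fiber, hsplit]
  nlinarith

lemma tendsto_fiber_atTop (hc : 0 < c) (hd : 0 < d) (hβ : 2 < β) :
    Tendsto (fiber a c d α β) atTop atBot := by
  have hbracket : Tendsto (fun t : ℝ => a - d * t ^ (β - 2)) atTop atBot :=
    tendsto_atBot_add_const_left _ a
      (tendsto_neg_atBot_iff.2 ((tendsto_rpow_atTop (sub_pos.2 hβ)).const_mul_atTop hd))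
  refine tendsto_atBot_mono' _ ?_ ((tendsto_rpow_atTop two_pos).atTop_mul_atBot₀ hbracket)
  filter_upwards [eventually_gt_atTop 0] with t ht
  have hsplit : t ^ β = t ^ (2 : ℝ) * t ^ (β - 2) := by rw [← rpow_add ht]; ring_nf
  have : 0 ≤ c * t ^ α := by have := rpow_pos_of_pos ht α; positivity
  rw [fiber, hsplit]
  nlinarith

lemma strictMonoOn_fiber {D : Set ℝ} (hD : Convex ℝ D) (hD₀ : D ⊆ Ioi 0)
    (hg : ∀ t ∈ interior D, fiberSlope c d α β t < 2 * a) : StrictMonoOn (fiber a c d α β) D :=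
  strictMonoOn_of_hasDerivWithinAt_pos hD (continuousOn_fiber.mono hD₀)
    (fun t ht => (hasDerivAt_fiber (hD₀ (interior_subset ht))).hasDerivWithinAt)
    fun t ht => mul_pos (hD₀ (interior_subset ht)) (by linarith [hg t ht])

lemma strictAntiOn_fiber {D : Set ℝ} (hD : Convex ℝ D) (hD₀ : D ⊆ Ioi 0)
    (hg : ∀ t ∈ interior D, 2 * a < fiberSlope c d α β t) : StrictAntiOn (fiber a c d α β) D :=
  strictAntiOn_of_hasDerivWithinAt_neg hD (continuousOn_fiber.mono hD₀)
    (fun t ht => (hasDerivAt_fiber (hD₀ (interior_subset ht))).hasDerivWithinAt)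
    fun t ht => mul_neg_of_pos_of_neg (hD₀ (interior_subset ht)) (by linarith [hg t ht])

lemma antitoneOn_fiber {D : Set ℝ} (hD : Convex ℝ D) (hD₀ : D ⊆ Ioi 0)
    (hg : ∀ t ∈ interior D, 2 * a ≤ fiberSlope c d α β t) : AntitoneOn (fiber a c d α β) D :=
  antitoneOn_of_hasDerivWithinAt_nonpos hD (continuousOn_fiber.mono hD₀)
    (fun t ht => (hasDerivAt_fiber (hD₀ (interior_subset ht))).hasDerivWithinAt)
    fun t ht => mul_nonpos_of_nonneg_of_nonpos (hD₀ (interior_subset ht)).le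
      (by linarith [hg t ht])

lemma setOf_deriv_fiber_eq_zero :
    {t | 0 < t ∧ deriv (fiber a c d α β) t = 0} = {t ∈ Ioi 0 | fiberSlope c d α β t = 2 * a} := by
  ext t
  refine and_congr_right fun (ht : 0 < t) => ?_
  rw [(hasDerivAt_fiber ht).deriv, mul_eq_zero, sub_eq_zero, or_iff_right ht.ne', eq_comm]

lemma encard_setOf_deriv_fiber_eq_zero_le_two (hc : 0 < c) (hd : 0 < d) (hα0 : 0 < α)
    (hα2 : α < 2) (hβ : 2 < β) : {t | 0 < t ∧ deriv (fiber a c d α β) t = 0}.encard ≤ 2 := by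
  obtain ⟨t₀, -, hanti, hmono⟩ := exists_strictAntiOn_strictMonoOn_fiberSlope hc hd hα0 hα2 hβ
  rw [setOf_deriv_fiber_eq_zero]
  exact encard_sep_eq_le_two_of_strictAnti_strictMono hanti hmono

lemma setOf_deriv_fiber_eq_zero_eq_pair (hc : 0 < c) (hd : 0 < d) (hα0 : 0 < α) (hα2 : α < 2)
    (hβ : 2 < β) {t₁ t₂ : ℝ} (ht₁ : 0 < t₁) (ht₁₂ : t₁ < t₂)
    (hg₁ : fiberSlope c d α β t₁ = 2 * a) (hg₂ : fiberSlope c d α β t₂ = 2 * a) :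
    {t | 0 < t ∧ deriv (fiber a c d α β) t = 0} = {t₁, t₂} := by
  refine ((toFinite _).eq_of_subset_of_encard_le ?_ ?_).symm
  · rw [setOf_deriv_fiber_eq_zero, pair_subset_iff]
    exact ⟨⟨ht₁, hg₁⟩, ⟨ht₁.trans ht₁₂, hg₂⟩⟩
  · rw [encard_pair ht₁₂.ne]
    exact encard_setOf_deriv_fiber_eq_zero_le_two hc hd hα0 hα2 hβ

lemma exists_fiber_strictAntiOn_strictMonoOn_strictAntiOn (hc : 0 < c) (hd : 0 < d)
    (hα0 : 0 < α) (hα2 : α < 2) (hβ : 2 < β) {s : ℝ} (hs : 0 < s)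
    (hls : 0 < fiber a c d α β s) :
    ∃ t₁ t₂, 0 < t₁ ∧ t₁ < t₂ ∧
      fiberSlope c d α β t₁ = 2 * a ∧ fiberSlope c d α β t₂ = 2 * a ∧
      StrictAntiOn (fiber a c d α β) (Ioc 0 t₁) ∧ StrictMonoOn (fiber a c d α β) (Icc t₁ t₂) ∧
      StrictAntiOn (fiber a c d α β) (Ici t₂) := by
  obtain ⟨t₀, ht₀, hanti, hmono⟩ := exists_strictAntiOn_strictMonoOn_fiberSlope hc hd hα0 hα2 hβ
  have hgt₀ : fiberSlope c d α β t₀ < 2 * a := by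
    by_contra! h
    have hmin : IsMinOn (fiberSlope c d α β) (Ioi 0) t₀ :=
      isMinOn_Ioi_of_anti_mono hanti.antitoneOn hmono.monotoneOn
    have hf : AntitoneOn (fiber a c d α β) (Ioi 0) :=
      antitoneOn_fiber (convex_Ioi 0) subset_rfl fun t ht => h.trans (hmin (interior_subset ht))
    exact ((hf.mono Ioc_subset_Ioi_self).lt_of_eventually_lt_nhdsGT
      (fiber_eventually_neg hc hd hα2) ⟨hs, le_rfl⟩).not_gt hls
  obtain ⟨t₁, ⟨ht₁, ht₁₀⟩, hg₁⟩ := exists_mem_Ioo_eq_of_tendsto_nhdsGT ht₀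
    (continuousOn_fiberSlope.mono Ioc_subset_Ioi_self)
    (tendsto_fiberSlope_nhdsGT_zero hc hd hα0 hα2 hβ) hgt₀
  obtain ⟨t₂, ht₀₂, hg₂⟩ := exists_gt_eq_of_tendsto_atTop
    (continuousOn_fiberSlope.mono (Ici_subset_Ioi.2 ht₀))
    (tendsto_fiberSlope_atTop hc hd hα0 hβ) hgt₀
  refine ⟨t₁, t₂, ht₁, ht₁₀.trans ht₀₂, hg₁, hg₂,
    strictAntiOn_fiber (convex_Ioc 0 t₁) Ioc_subset_Ioi_self ?_,
    strictMonoOn_fiber (convex_Icc t₁ t₂) (fun t ht => ht₁.trans_le ht.1) ?_,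
    strictAntiOn_fiber (convex_Ici t₂) (Ici_subset_Ioi.2 (ht₀.trans ht₀₂)) ?_⟩
  · rw [interior_Ioc]
    rintro t ⟨ht, htt₁⟩
    exact hg₁ ▸ hanti ⟨ht, (htt₁.trans ht₁₀).le⟩ ⟨ht₁, ht₁₀.le⟩ htt₁
  · rw [interior_Icc]
    rintro t ⟨ht₁t, htt₂⟩
    rcases le_total t t₀ with h | h
    · exact hg₁ ▸ hanti ⟨ht₁, ht₁₀.le⟩ ⟨ht₁.trans ht₁t, h⟩ ht₁t
    · exact hg₂ ▸ hmono h ht₀₂.le htt₂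
  · rw [interior_Ici]
    intro t ht
    exact hg₂ ▸ hmono ht₀₂.le (ht₀₂.trans ht).le ht

end

theorem stmt_2_general (a c d α β : ℝ) (hc : 0 < c) (hd : 0 < d)
    (hα0 : 0 < α) (hα2 : α < 2) (hβ : 2 < β)
    (l : ℝ → ℝ) (hl : l = fun t => a * t ^ (2 : ℝ) - c * t ^ α - d * t ^ β) :
    (∃ ε > 0, ∀ t, 0 < t → t < ε → l t < 0) ∧
    Filter.Tendsto l Filter.atTop Filter.atBot ∧
    Set.encard {t : ℝ | 0 < t ∧ deriv l t = 0} ≤ 2 ∧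
    ((∃ t, 0 < t ∧ 0 < l t) →
      ∃ t₁ t₂ : ℝ, 0 < t₁ ∧ t₁ < t₂ ∧
        {t : ℝ | 0 < t ∧ deriv l t = 0} = {t₁, t₂} ∧
        IsLocalMin l t₁ ∧ l t₁ < 0 ∧
        (∀ t, 0 < t → l t ≤ l t₂) ∧ 0 < l t₂) := by
  obtain rfl : l = fiber a c d α β := hl
  have hneg := fiber_eventually_neg (a := a) (β := β) hc hd hα2
  refine ⟨?_, tendsto_fiber_atTop hc hd hβ,
    encard_setOf_deriv_fiber_eq_zero_le_two hc hd hα0 hα2 hβ, ?_⟩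
  · obtain ⟨ε, hε, hsub⟩ := mem_nhdsGT_iff_exists_Ioo_subset.1 hneg
    exact ⟨ε, hε, fun t ht htε => hsub ⟨ht, htε⟩⟩
  rintro ⟨s, hs, hls⟩
  obtain ⟨t₁, t₂, ht₁, ht₁₂, hg₁, hg₂, h₀, h₁, h₂⟩ :=
    exists_fiber_strictAntiOn_strictMonoOn_strictAntiOn hc hd hα0 hα2 hβ hs hls
  have hneg₁ : ∀ t ∈ Ioc 0 t₁, fiber a c d α β t < 0 := fun t ht =>
    h₀.antitoneOn.lt_of_eventually_lt_nhdsGT hneg ht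
  have hmax : IsMaxOn (fiber a c d α β) (Ici t₁) t₂ :=
    isMaxOn_Ici_of_mono_anti h₁.monotoneOn h₂.antitoneOn
  have hpos : 0 < fiber a c d α β t₂ :=
    hls.trans_le (hmax (le_of_not_ge fun h => (hneg₁ s ⟨hs, h⟩).not_gt hls))
  refine ⟨t₁, t₂, ht₁, ht₁₂, setOf_deriv_fiber_eq_zero_eq_pair hc hd hα0 hα2 hβ ht₁ ht₁₂ hg₁ hg₂,
    isLocalMin_of_anti_mono ht₁ ht₁₂ h₀.antitoneOn (h₁.monotoneOn.mono Ico_subset_Icc_self),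
    hneg₁ t₁ ⟨ht₁, le_rfl⟩, fun t ht => ?_, hpos⟩
  rcases le_total t t₁ with h | h
  exacts [(hneg₁ t ⟨ht, h⟩).le.trans hpos.le, hmax h]

theorem stmt_2 (a c d α β : ℝ) (ha : 0 < a) (hc : 0 < c) (hd : 0 < d)
    (hα0 : 0 < α) (hα2 : α < 2) (hβ : 2 < β)
    (l : ℝ → ℝ) (hl : l = fun t => a * t ^ (2 : ℝ) - c * t ^ α - d * t ^ β) :
    (∃ ε > 0, ∀ t, 0 < t → t < ε → l t < 0) ∧
    Filter.Tendsto l Filter.atTop Filter.atBot ∧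
    Set.encard {t : ℝ | 0 < t ∧ deriv l t = 0} ≤ 2 ∧
    ((∃ t, 0 < t ∧ 0 < l t) →
      ∃ t₁ t₂ : ℝ, 0 < t₁ ∧ t₁ < t₂ ∧
        {t : ℝ | 0 < t ∧ deriv l t = 0} = {t₁, t₂} ∧
        IsLocalMin l t₁ ∧ l t₁ < 0 ∧
        (∀ t, 0 < t → l t ≤ l t₂) ∧ 0 < l t₂) :=
  stmt_2_general a c d α β hc hd hα0 hα2 hβ l hl
end

section
/- Let h(t) = (1/2)t² − B t^{ρ} − C t^{σ} − D t^{τ} with B, C, D > 0 and exponents 0 < σ < ρ < 2 < τ. Suppose there exists t̄ > 0 with h(t̄) > 0. Then there exist 0 < R₀ < R₁ such that h(R₀) = h(R₁) = 0 and h(t) > 0 if and only if t ∈ (R₀, R₁); furthermore h has exactly two critical points on (0, ∞): a local minimum at negative level located in (0, R₀) and a global maximum at positive level located in (R₀, R₁). -/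
/-!
Write `h' = t g` with `g t = 1 - Bρ t^(ρ-2) - Cσ t^(σ-2) - Dτ t^(τ-2)`. Then
`g' = t^(τ-3) φ`, where `φ` decreases strictly from `+∞` to `-Dτ(τ-2) < 0`; so `g` increases,
then decreases, and tends to `-∞` at both ends of `(0, ∞)`. By the mean value theorem,
`h t̄ > 0 = h 0` forces `g > 0` somewhere, so `g` has exactly two zeros `a < b`: `h` decreases
on `[0, a]`, increases on `[a, b]` and decreases on `[b, ∞)`. As `h 0 = 0` and `h → -∞`, this
shape gives the zeros `R₀ ∈ (a, b)` and `R₁ > b`, the local minimum at `a` and the global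
maximum at `b`.
-/

open Set Filter Topology

theorem exists_hasDerivAt_pos_of_lt {f f' : ℝ → ℝ} {a b : ℝ} (hab : a < b)
    (hf : ContinuousOn f (Icc a b)) (hf' : ∀ x ∈ Ioo a b, HasDerivAt f (f' x) x)
    (hlt : f a < f b) : ∃ c ∈ Ioo a b, 0 < f' c := by
  obtain ⟨c, hc, hslope⟩ := exists_hasDerivAt_eq_slope f f' hab hf hf'
  exact ⟨c, hc, hslope ▸ div_pos (sub_pos.2 hlt) (sub_pos.2 hab)⟩

theorem exists_sign_change_of_strictAntiOn {φ : ℝ → ℝ} (hφ : StrictAntiOn φ (Ioi 0))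
    (hcont : ContinuousOn φ (Ioi 0)) (h₀ : ∀ᶠ t in 𝓝[>] 0, 0 < φ t)
    (htop : ∀ᶠ t in atTop, φ t < 0) :
    ∃ m, 0 < m ∧ (∀ t ∈ Ioo 0 m, 0 < φ t) ∧ ∀ t ∈ Ioi m, φ t < 0 := by
  obtain ⟨u, hφu, hu⟩ := (h₀.and self_mem_nhdsWithin).exists
  obtain ⟨v, hφv, huv⟩ := (htop.and (eventually_gt_atTop u)).exists
  obtain ⟨m, ⟨hum, -⟩, hφm⟩ :=
    intermediate_value_Ioo' huv.le (hcont.mono fun x hx => hu.trans_le hx.1) ⟨hφv, hφu⟩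
  have hm : 0 < m := hu.trans hum
  exact ⟨m, hm, fun t ht => hφm ▸ hφ ht.1 hm ht.2,
    fun t ht => hφm ▸ hφ hm (hm.trans ht) ht⟩

theorem exists_zeros_of_strictMonoOn_of_strictAntiOn {f : ℝ → ℝ} {l m : ℝ} (hlm : l ≤ m)
    (hf : ContinuousOn f (Ici l)) (hmono : StrictMonoOn f (Icc l m))
    (hanti : StrictAntiOn f (Ici m)) (hl : f l < 0) (hm : 0 < f m)
    (htop : ∀ᶠ t in atTop, f t < 0) :
    ∃ a b, l < a ∧ a < m ∧ m < b ∧ f a = 0 ∧ f b = 0 ∧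
      ∀ t, l ≤ t → (0 < f t ↔ a < t ∧ t < b) ∧ (f t < 0 ↔ t < a ∨ b < t) := by
  obtain ⟨a, ⟨hla, ham⟩, hfa⟩ :=
    intermediate_value_Ioo hlm (hf.mono Icc_subset_Ici_self) ⟨hl, hm⟩
  obtain ⟨v, hfv, hmv⟩ := (htop.and (eventually_gt_atTop m)).exists
  obtain ⟨b, ⟨hmb, -⟩, hfb⟩ :=
    intermediate_value_Ioo' hmv.le (hf.mono (Icc_subset_Ici_iff hmv.le |>.2 hlm)) ⟨hfv, hm⟩
  refine ⟨a, b, hla, ham, hmb, hfa, hfb, fun t ht => ?_⟩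
  rcases le_total t m with htm | hmt
  · have ha : a ∈ Icc l m := ⟨hla.le, ham.le⟩
    have ht : t ∈ Icc l m := ⟨ht, htm⟩
    rw [← hfa, hmono.lt_iff_lt ha ht, hmono.lt_iff_lt ht ha]
    grind
  · have hb : b ∈ Ici m := hmb.le
    rw [← hfb, hanti.lt_iff_gt hmt hb, hanti.lt_iff_gt hb hmt]
    grind

theorem exists_zeros_of_strictAntiOn_of_strictMonoOn_of_strictAntiOn {f : ℝ → ℝ} {a b : ℝ}
    (ha : 0 < a) (hab : a < b) (hf : ContinuousOn f (Ici a)) (hf₀ : f 0 = 0)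
    (h₁ : StrictAntiOn f (Icc 0 a)) (h₂ : StrictMonoOn f (Icc a b))
    (h₃ : StrictAntiOn f (Ici b)) (htop : ∀ᶠ t in atTop, f t < 0)
    (hpos : ∃ t, 0 < t ∧ 0 < f t) :
    ∃ R₀ R₁, a < R₀ ∧ R₀ < b ∧ b < R₁ ∧ f R₀ = 0 ∧ f R₁ = 0 ∧
      (∀ t, 0 < t → (0 < f t ↔ R₀ < t ∧ t < R₁)) ∧
      IsLocalMin f a ∧ f a < 0 ∧ (∀ t, 0 < t → f t ≤ f b) ∧ 0 < f b := by
  have hneg : ∀ t, 0 < t → t ≤ a → f t < 0 := fun t ht hta =>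
    hf₀ ▸ h₁ ⟨le_rfl, ha.le⟩ ⟨ht.le, hta⟩ ht
  have hle : ∀ t, a < t → f t ≤ f b := fun t ht =>
    isMaxOn_Ioo_of_mono_anti (h₂.monotoneOn.mono Ioc_subset_Icc_self)
      (h₃.antitoneOn.mono Ico_subset_Ici_self) ⟨ht, lt_add_one t⟩
  have hfb : 0 < f b := by
    obtain ⟨t, ht, hft⟩ := hpos
    by_cases hta : t ≤ a
    · exact absurd hft (hneg t ht hta).not_gt
    · exact hft.trans_le (hle t (not_le.1 hta))
  obtain ⟨R₀, R₁, haR₀, hR₀b, hbR₁, hR₀, hR₁, hsign⟩ :=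
    exists_zeros_of_strictMonoOn_of_strictAntiOn hab.le hf h₂ h₃ (hneg a ha le_rfl) hfb htop
  refine ⟨R₀, R₁, haR₀, hR₀b, hbR₁, hR₀, hR₁, fun t ht => ?_,
    isLocalMin_of_anti_mono ha hab (h₁.antitoneOn.mono Ioc_subset_Icc_self)
      (h₂.monotoneOn.mono Ico_subset_Icc_self), hneg a ha le_rfl, fun t ht => ?_, hfb⟩
  · rcases le_or_gt t a with hta | hat
    · exact iff_of_false (hneg t ht hta).not_gt fun h => (haR₀.trans h.1).not_ge hta
    · exact (hsign t hat.le).1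
  · rcases le_or_gt t a with hta | hat
    · exact (hneg t ht hta).le.trans hfb.le
    · exact hle t hat

namespace Fibering

variable (B C D ρ σ τ : ℝ)

noncomputable def h (t : ℝ) : ℝ :=
  (1 / 2) * t ^ (2 : ℝ) - B * t ^ ρ - C * t ^ σ - D * t ^ τ

noncomputable def g (t : ℝ) : ℝ :=
  1 - B * ρ * t ^ (ρ - 2) - C * σ * t ^ (σ - 2) - D * τ * t ^ (τ - 2)

noncomputable def φ (t : ℝ) : ℝ :=
  B * ρ * (2 - ρ) * t ^ (ρ - τ) + C * σ * (2 - σ) * t ^ (σ - τ) - D * τ * (τ - 2)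

variable {B C D ρ σ τ}

theorem h_zero (hρ : 0 < ρ) (hσ : 0 < σ) (hτ : 0 < τ) : h B C D ρ σ τ 0 = 0 := by
  simp [h, Real.zero_rpow hρ.ne', Real.zero_rpow hσ.ne', Real.zero_rpow hτ.ne']

theorem continuous_h (hρ : 0 ≤ ρ) (hσ : 0 ≤ σ) (hτ : 0 ≤ τ) :
    Continuous (h B C D ρ σ τ) := by
  have := Real.continuous_rpow_const (zero_le_two (α := ℝ))
  have := Real.continuous_rpow_const hρ
  have := Real.continuous_rpow_const hσ
  have := Real.continuous_rpow_const hτ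
  unfold h
  fun_prop

theorem hasDerivAt_h {t : ℝ} (ht : 0 < t) :
    HasDerivAt (h B C D ρ σ τ) (t * g B C D ρ σ τ t) t := by
  have hpow : ∀ p : ℝ, HasDerivAt (fun t => t ^ p) (p * (t * t ^ (p - 2))) t := fun p => by
    convert Real.hasDerivAt_rpow_const (p := p) (Or.inl ht.ne') using 2
    rw [show p - 1 = p - 2 + 1 by ring, Real.rpow_add_one ht.ne', mul_comm]
  refine ((((hpow 2).const_mul (1 / 2)).sub ((hpow ρ).const_mul B)).sub
    ((hpow σ).const_mul C)).sub ((hpow τ).const_mul D) |>.congr_deriv ?_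
  simp only [g, sub_self, Real.rpow_zero]
  ring

theorem hasDerivAt_g {t : ℝ} (ht : 0 < t) :
    HasDerivAt (g B C D ρ σ τ) (t ^ (τ - 3) * φ B C D ρ σ τ t) t := by
  have hpow : ∀ p : ℝ,
      HasDerivAt (fun t => t ^ (p - 2)) ((p - 2) * (t ^ (τ - 3) * t ^ (p - τ))) t := fun p => by
    convert Real.hasDerivAt_rpow_const (p := p - 2) (Or.inl ht.ne') using 2
    rw [← Real.rpow_add ht]
    ring_nf
  refine (((hasDerivAt_const t 1).sub ((hpow ρ).const_mul (B * ρ))).sub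
    ((hpow σ).const_mul (C * σ))).sub ((hpow τ).const_mul (D * τ)) |>.congr_deriv ?_
  simp only [φ, sub_self, Real.rpow_zero]
  ring

theorem continuousOn_φ : ContinuousOn (φ B C D ρ σ τ) (Ioi 0) := fun t ht =>
  ContinuousAt.continuousWithinAt <| by
    unfold φ
    fun_prop (disch := exact Or.inl (ne_of_gt ht))

theorem strictAntiOn_φ (hB : 0 < B) (hC : 0 < C) (hσ : 0 < σ) (hσρ : σ < ρ) (hρ : ρ < 2)
    (hτ : 2 < τ) : StrictAntiOn (φ B C D ρ σ τ) (Ioi 0) := fun x hx y _ hxy => by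
  have hB' : 0 < B * ρ * (2 - ρ) := mul_pos (mul_pos hB (hσ.trans hσρ)) (by linarith)
  have hC' : 0 < C * σ * (2 - σ) := mul_pos (mul_pos hC hσ) (by linarith)
  have h₁ := mul_lt_mul_of_pos_left
    (Real.rpow_lt_rpow_of_neg hx hxy (by linarith : ρ - τ < 0)) hB'
  have h₂ := mul_lt_mul_of_pos_left
    (Real.rpow_lt_rpow_of_neg hx hxy (by linarith : σ - τ < 0)) hC'
  simp only [φ]
  linarith

theorem eventually_φ_pos_nhdsGT (hB : 0 < B) (hC : 0 < C) (hσ : 0 < σ) (hσρ : σ < ρ)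
    (hρ : ρ < 2) (hτ : 2 < τ) : ∀ᶠ t in 𝓝[>] 0, 0 < φ B C D ρ σ τ t := by
  have hlim := (tendsto_rpow_neg_nhdsGT_zero (by linarith : σ - τ < 0)).const_mul_atTop
    (mul_pos (mul_pos hC hσ) (by linarith : (0 : ℝ) < 2 - σ))
  filter_upwards [hlim.eventually_gt_atTop (D * τ * (τ - 2)), self_mem_nhdsWithin]
    with t hlarge ht
  have : 0 ≤ B * ρ * (2 - ρ) * t ^ (ρ - τ) :=
    mul_nonneg (mul_nonneg (mul_nonneg hB.le (by linarith)) (by linarith))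
      (Real.rpow_pos_of_pos ht _).le
  simp only [φ]
  linarith

theorem eventually_φ_neg_atTop (hD : 0 < D) (hσρ : σ < ρ) (hρ : ρ < 2) (hτ : 2 < τ) :
    ∀ᶠ t in atTop, φ B C D ρ σ τ t < 0 := by
  have hlim : Tendsto (φ B C D ρ σ τ) atTop
      (𝓝 (B * ρ * (2 - ρ) * 0 + C * σ * (2 - σ) * 0 - D * τ * (τ - 2))) := by
    refine ((Tendsto.const_mul _ ?_).add (Tendsto.const_mul _ ?_)).sub_const _
    · simpa using tendsto_rpow_neg_atTop (by linarith : 0 < τ - ρ)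
    · simpa using tendsto_rpow_neg_atTop (by linarith : 0 < τ - σ)
  refine hlim.eventually_lt_const ?_
  have : 0 < D * τ * (τ - 2) := mul_pos (mul_pos hD (by linarith)) (by linarith)
  linarith

theorem eventually_g_neg_nhdsGT (hB : 0 < B) (hC : 0 < C) (hD : 0 < D) (hσ : 0 < σ)
    (hσρ : σ < ρ) (hρ : ρ < 2) (hτ : 2 < τ) :
    ∀ᶠ t in 𝓝[>] 0, g B C D ρ σ τ t < 0 := by
  have hlim := (tendsto_rpow_neg_nhdsGT_zero (by linarith : σ - 2 < 0)).const_mul_atTop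
    (mul_pos hC hσ)
  filter_upwards [hlim.eventually_gt_atTop 1, self_mem_nhdsWithin] with t hlarge ht
  have : 0 ≤ B * ρ * t ^ (ρ - 2) :=
    mul_nonneg (mul_nonneg hB.le (by linarith)) (Real.rpow_pos_of_pos ht _).le
  have : 0 ≤ D * τ * t ^ (τ - 2) :=
    mul_nonneg (mul_nonneg hD.le (by linarith)) (Real.rpow_pos_of_pos ht _).le
  simp only [g]
  linarith

theorem eventually_g_neg_atTop (hB : 0 < B) (hC : 0 < C) (hD : 0 < D) (hσ : 0 < σ)
    (hσρ : σ < ρ) (hτ : 2 < τ) : ∀ᶠ t in atTop, g B C D ρ σ τ t < 0 := by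
  have hlim := (tendsto_rpow_atTop (by linarith : 0 < τ - 2)).const_mul_atTop
    (mul_pos hD (by linarith : 0 < τ))
  filter_upwards [hlim.eventually_gt_atTop 1, eventually_gt_atTop 0] with t hlarge ht
  have : 0 ≤ B * ρ * t ^ (ρ - 2) := mul_nonneg (mul_nonneg hB.le (by linarith)) (by positivity)
  have : 0 ≤ C * σ * t ^ (σ - 2) := mul_nonneg (mul_nonneg hC.le hσ.le) (by positivity)
  simp only [g]
  linarith

theorem eventually_h_neg_atTop (hB : 0 < B) (hC : 0 < C) (hD : 0 < D) (hτ : 2 < τ) :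
    ∀ᶠ t in atTop, h B C D ρ σ τ t < 0 := by
  have hlim := (tendsto_rpow_atTop (by linarith : 0 < τ - 2)).const_mul_atTop hD
  filter_upwards [hlim.eventually_gt_atTop 1, eventually_gt_atTop 0] with t hlarge ht
  have hsplit : D * t ^ τ = t ^ (2 : ℝ) * (D * t ^ (τ - 2)) := by
    rw [mul_left_comm, ← Real.rpow_add ht, add_sub_cancel]
  have ht2 : 0 < t ^ (2 : ℝ) := by positivity
  have := mul_lt_mul_of_pos_left hlarge ht2
  have : 0 ≤ B * t ^ ρ := mul_nonneg hB.le (by positivity)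
  have : 0 ≤ C * t ^ σ := mul_nonneg hC.le (by positivity)
  simp only [h, hsplit]
  linarith

theorem exists_strictMonoOn_strictAntiOn_g (hB : 0 < B) (hC : 0 < C) (hD : 0 < D)
    (hσ : 0 < σ) (hσρ : σ < ρ) (hρ : ρ < 2) (hτ : 2 < τ) :
    ∃ m, 0 < m ∧ StrictMonoOn (g B C D ρ σ τ) (Ioc 0 m) ∧
      StrictAntiOn (g B C D ρ σ τ) (Ici m) := by
  obtain ⟨m, hm, hpos, hneg⟩ := exists_sign_change_of_strictAntiOn
    (strictAntiOn_φ hB hC hσ hσρ hρ hτ) continuousOn_φ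
    (eventually_φ_pos_nhdsGT hB hC hσ hσρ hρ hτ) (eventually_φ_neg_atTop hD hσρ hρ hτ)
  set g' : ℝ → ℝ := fun t => t ^ (τ - 3) * φ B C D ρ σ τ t
  have hg : ∀ t, 0 < t → HasDerivAt (g B C D ρ σ τ) (g' t) t := fun t ht => hasDerivAt_g ht
  refine ⟨m, hm, strictMonoOn_of_hasDerivWithinAt_pos (convex_Ioc 0 m) (f' := g')
      (fun t ht => (hg t ht.1).continuousAt.continuousWithinAt)
      (fun t ht => ?_) (fun t ht => ?_),
    strictAntiOn_of_hasDerivWithinAt_neg (convex_Ici m) (f' := g')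
      (fun t ht => (hg t (hm.trans_le ht)).continuousAt.continuousWithinAt)
      (fun t ht => ?_) (fun t ht => ?_)⟩
  all_goals simp only [interior_Ioc, interior_Ici] at ht
  · exact (hg t ht.1).hasDerivWithinAt
  · exact mul_pos (Real.rpow_pos_of_pos ht.1 _) (hpos t ht)
  · exact (hg t (hm.trans ht)).hasDerivWithinAt
  · exact mul_neg_of_pos_of_neg (Real.rpow_pos_of_pos (hm.trans ht) _) (hneg t ht)

theorem exists_sign_pattern_g (hB : 0 < B) (hC : 0 < C) (hD : 0 < D) (hσ : 0 < σ)
    (hσρ : σ < ρ) (hρ : ρ < 2) (hτ : 2 < τ)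
    (hpos : ∃ t, 0 < t ∧ 0 < h B C D ρ σ τ t) :
    ∃ a b, 0 < a ∧ a < b ∧ ∀ t, 0 < t →
      (0 < g B C D ρ σ τ t ↔ a < t ∧ t < b) ∧
      (g B C D ρ σ τ t < 0 ↔ t < a ∨ b < t) := by
  obtain ⟨m, hm, hmono, hanti⟩ := exists_strictMonoOn_strictAntiOn_g hB hC hD hσ hσρ hρ hτ
  have hgm : 0 < g B C D ρ σ τ m := by
    have hρ₀ : 0 < ρ := hσ.trans hσρ
    have hτ₀ : 0 < τ := by linarith
    obtain ⟨t, ht, hht⟩ := hpos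
    obtain ⟨s, hs, hgs⟩ := exists_hasDerivAt_pos_of_lt ht
      (continuous_h hρ₀.le hσ.le hτ₀.le).continuousOn
      (fun x hx => hasDerivAt_h hx.1) (by rwa [h_zero hρ₀ hσ hτ₀])
    exact (pos_of_mul_pos_right hgs hs.1.le).trans_le <| isMaxOn_Ioo_of_mono_anti
      hmono.monotoneOn (hanti.antitoneOn.mono Ico_subset_Ici_self) ⟨hs.1, lt_add_one s⟩
  obtain ⟨u, hgu, hu, hum⟩ :=
    ((eventually_g_neg_nhdsGT hB hC hD hσ hσρ hρ hτ).and (Ioo_mem_nhdsGT hm)).exists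
  obtain ⟨a, b, hua, ham, hmb, -, -, hsign⟩ := exists_zeros_of_strictMonoOn_of_strictAntiOn
    hum.le (fun t ht => (hasDerivAt_g (hu.trans_le ht)).continuousAt.continuousWithinAt)
    (hmono.mono (Icc_subset_Ioc_iff hum.le |>.2 ⟨hu, le_rfl⟩)) hanti hgu hgm
    (eventually_g_neg_atTop hB hC hD hσ hσρ hτ)
  refine ⟨a, b, hu.trans hua, ham.trans hmb, fun t ht => ?_⟩
  rcases le_or_gt u t with hut | htu
  · exact hsign t hut
  · have hgt : g B C D ρ σ τ t < 0 :=
      (hmono ⟨ht, (htu.trans hum).le⟩ ⟨hu, hum.le⟩ htu).trans hgu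
    exact ⟨iff_of_false hgt.not_gt fun h => (htu.trans hua).not_gt h.1,
      iff_of_true hgt (Or.inl (htu.trans hua))⟩

theorem strictAntiOn_h {s : Set ℝ} (hs : Convex ℝ s) (hs₀ : s ⊆ Ici 0) (hρ : 0 ≤ ρ)
    (hσ : 0 ≤ σ) (hτ : 0 ≤ τ) (hg : ∀ t ∈ interior s, g B C D ρ σ τ t < 0) :
    StrictAntiOn (h B C D ρ σ τ) s :=
  have hpos : ∀ t ∈ interior s, 0 < t := fun t ht => by simpa using interior_mono hs₀ ht
  strictAntiOn_of_hasDerivWithinAt_neg hs (continuous_h hρ hσ hτ).continuousOn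
    (fun t ht => (hasDerivAt_h (hpos t ht)).hasDerivWithinAt)
    (fun t ht => mul_neg_of_pos_of_neg (hpos t ht) (hg t ht))

theorem strictMonoOn_h {s : Set ℝ} (hs : Convex ℝ s) (hs₀ : s ⊆ Ici 0) (hρ : 0 ≤ ρ)
    (hσ : 0 ≤ σ) (hτ : 0 ≤ τ) (hg : ∀ t ∈ interior s, 0 < g B C D ρ σ τ t) :
    StrictMonoOn (h B C D ρ σ τ) s :=
  have hpos : ∀ t ∈ interior s, 0 < t := fun t ht => by simpa using interior_mono hs₀ ht
  strictMonoOn_of_hasDerivWithinAt_pos hs (continuous_h hρ hσ hτ).continuousOn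
    (fun t ht => (hasDerivAt_h (hpos t ht)).hasDerivWithinAt)
    (fun t ht => mul_pos (hpos t ht) (hg t ht))

theorem setOf_deriv_h_eq_zero {a b : ℝ} (ha : 0 < a) (hab : a < b)
    (hsign : ∀ t, 0 < t →
      (0 < g B C D ρ σ τ t ↔ a < t ∧ t < b) ∧
      (g B C D ρ σ τ t < 0 ↔ t < a ∨ b < t)) :
    {t | 0 < t ∧ deriv (h B C D ρ σ τ) t = 0} = {a, b} := by
  have hzero : ∀ t, 0 < t → (g B C D ρ σ τ t = 0 ↔ t = a ∨ t = b) := fun t ht => by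
    have := hsign t ht
    grind
  ext t
  simp only [mem_ofPred_eq, mem_insert_iff, mem_singleton_iff]
  constructor
  · rintro ⟨ht, hdt⟩
    rw [(hasDerivAt_h ht).deriv, mul_eq_zero, or_iff_right ht.ne'] at hdt
    exact (hzero t ht).1 hdt
  · intro hta
    have ht : 0 < t := by rcases hta with rfl | rfl <;> linarith
    exact ⟨ht, by rw [(hasDerivAt_h ht).deriv, (hzero t ht).2 hta, mul_zero]⟩

theorem exists_strictAntiOn_strictMonoOn_strictAntiOn_h (hB : 0 < B) (hC : 0 < C) (hD : 0 < D)
    (hσ : 0 < σ) (hσρ : σ < ρ) (hρ : ρ < 2) (hτ : 2 < τ)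
    (hpos : ∃ t, 0 < t ∧ 0 < h B C D ρ σ τ t) :
    ∃ a b, 0 < a ∧ a < b ∧ StrictAntiOn (h B C D ρ σ τ) (Icc 0 a) ∧
      StrictMonoOn (h B C D ρ σ τ) (Icc a b) ∧ StrictAntiOn (h B C D ρ σ τ) (Ici b) ∧
      {t | 0 < t ∧ deriv (h B C D ρ σ τ) t = 0} = {a, b} := by
  have hρ₀ : 0 ≤ ρ := (hσ.trans hσρ).le
  have hτ₀ : 0 ≤ τ := by linarith
  obtain ⟨a, b, ha, hab, hsign⟩ := exists_sign_pattern_g hB hC hD hσ hσρ hρ hτ hpos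
  have hb : 0 < b := ha.trans hab
  refine ⟨a, b, ha, hab, ?_, ?_, ?_, setOf_deriv_h_eq_zero ha hab hsign⟩
  · refine strictAntiOn_h (convex_Icc 0 a) Icc_subset_Ici_self hρ₀ hσ.le hτ₀ ?_
    simp only [interior_Icc, mem_Ioo]
    exact fun t ht => (hsign t ht.1).2.2 (Or.inl ht.2)
  · refine strictMonoOn_h (convex_Icc a b) (Icc_subset_Ici_iff hab.le |>.2 ha.le)
      hρ₀ hσ.le hτ₀ ?_
    simp only [interior_Icc]
    exact fun t ht => (hsign t (ha.trans ht.1)).1.2 ht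
  · refine strictAntiOn_h (convex_Ici b) (Ici_subset_Ici.2 hb.le) hρ₀ hσ.le hτ₀ ?_
    simp only [interior_Ici, mem_Ioi]
    exact fun t ht => (hsign t (hb.trans ht)).2.2 (Or.inr ht)

end Fibering

theorem stmt_3 (B C D ρ σ τ : ℝ) (hB : 0 < B) (hC : 0 < C) (hD : 0 < D)
    (hσ0 : 0 < σ) (hσρ : σ < ρ) (hρ2 : ρ < 2) (hτ : 2 < τ)
    (h : ℝ → ℝ)
    (hh : h = fun t => (1 / 2) * t ^ (2 : ℝ) - B * t ^ ρ - C * t ^ σ - D * t ^ τ)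
    (hpos : ∃ t, 0 < t ∧ 0 < h t) :
    ∃ R₀ R₁ : ℝ, 0 < R₀ ∧ R₀ < R₁ ∧ h R₀ = 0 ∧ h R₁ = 0 ∧
      (∀ t, 0 < t → (0 < h t ↔ R₀ < t ∧ t < R₁)) ∧
      ∃ t₁ t₂ : ℝ, 0 < t₁ ∧ t₁ < R₀ ∧ R₀ < t₂ ∧ t₂ < R₁ ∧
        IsLocalMin h t₁ ∧ h t₁ < 0 ∧
        (∀ t, 0 < t → h t ≤ h t₂) ∧ 0 < h t₂ ∧
        {t : ℝ | 0 < t ∧ deriv h t = 0} = {t₁, t₂} := by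
  obtain rfl : h = Fibering.h B C D ρ σ τ := hh
  have hρ : 0 < ρ := hσ0.trans hσρ
  have hτ0 : 0 < τ := by linarith
  obtain ⟨a, b, ha, hab, h₁, h₂, h₃, hcrit⟩ :=
    Fibering.exists_strictAntiOn_strictMonoOn_strictAntiOn_h hB hC hD hσ0 hσρ hρ2 hτ hpos
  obtain ⟨R₀, R₁, haR₀, hR₀b, hbR₁, hR₀, hR₁, hsign, hmin, hha, hmax, hhb⟩ :=
    exists_zeros_of_strictAntiOn_of_strictMonoOn_of_strictAntiOn ha hab
      (Fibering.continuous_h hρ.le hσ0.le hτ0.le).continuousOn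
      (Fibering.h_zero hρ hσ0 hτ0) h₁ h₂ h₃
      (Fibering.eventually_h_neg_atTop hB hC hD hτ) hpos
  exact ⟨R₀, R₁, ha.trans haR₀, hR₀b.trans hbR₁, hR₀, hR₁, hsign,
    a, b, ha, haR₀, hR₀b, hbR₁, hmin, hha, hmax, hhb, hcrit⟩
end

section
/- Let N ≥ 3 and p̄ = 2+4/N < p, q, r < 2*, with γ_s = N(s−2)/(2s). If (u,v) ∈ S_{a₁} × S_{a₂} satisfies both P(u,v) = 0 and the second-order condition 2(|∇u|₂²+|∇v|₂²) = pγ_p² μ₁|u|_p^p + qγ_q² μ₂|v|_q^q + (rγ_r)² β∫|u|^{r₁}|v|^{r₂} (i.e. Φ''_{(u,v)}(0) = 0), then (pγ_p−2)γ_p μ₁|u|_p^p + (qγ_q−2)γ_q μ₂|v|_q^q + (rγ_r−2)rγ_r β∫|u|^{r₁}|v|^{r₂} = 0, and hence, since pγ_p, qγ_q, rγ_r > 2 and μ₁, μ₂, β > 0, u = 0 and v = 0. In particular the degenerate part 𝒫⁰_{a₁,a₂} of the Pohozaev manifold is empty in the purely L²-supercritical regime. -/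
/-!
Twice the Pohozaev identity minus the second-order identity eliminates the gradient terms and
leaves `∑ (s γ_s - 2) γ_s · (positive weight) · (nonlinear integral) = 0`. In the
`L²`-supercritical range `s > 2 + 4/N` every `s γ_s = N (s - 2) / 2` exceeds `2`, so all
terms are nonnegative and `∫ |u|^p = 0`, which forces `u = 0` a.e., contradicting `|u|₂ = a₁ > 0`.
-/

open MeasureTheory

section PohozaevExponent

variable {N s γ : ℝ}

lemma pohozaevExponent_pos (hN : 0 < N) (hs : 2 + 4 / N < s)
    (hγ : γ = N * (s - 2) / (2 * s)) : 0 < γ := by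
  have : 0 < 4 / N := by positivity
  exact hγ ▸ div_pos (mul_pos hN (by linarith)) (by linarith)

lemma two_lt_mul_pohozaevExponent (hN : 0 < N) (hs : 2 + 4 / N < s)
    (hγ : γ = N * (s - 2) / (2 * s)) : 2 < s * γ := by
  have hs0 : 0 < s := by linarith [show 0 < 4 / N by positivity]
  have hmul : s * (N * (s - 2) / (2 * s)) = N * (s - 2) / 2 := by field_simp
  have h4 : 4 < N * (s - 2) := by
    have := mul_lt_mul_of_pos_left (show 4 / N < s - 2 by linarith) hN
    rwa [mul_div_cancel₀ _ hN.ne'] at this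
  rw [hγ, hmul]
  linarith

end PohozaevExponent

lemma eq_zero_of_weighted_sum_eq_zero {a b c x y z : ℝ} (ha : 0 < a) (hb : 0 ≤ b) (hc : 0 ≤ c)
    (hx : 0 ≤ x) (hy : 0 ≤ y) (hz : 0 ≤ z) (h : a * x + b * y + c * z = 0) : x = 0 := by
  have hax : a * x = 0 := by nlinarith [mul_nonneg ha.le hx, mul_nonneg hb hy, mul_nonneg hc hz]
  exact (mul_eq_zero.mp hax).resolve_left ha.ne'

lemma ae_eq_zero_of_integral_abs_rpow_eq_zero {α : Type*} [MeasurableSpace α] {μ : Measure α}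
    {f : α → ℝ} {p : ℝ} (hint : Integrable (fun x => |f x| ^ p) μ)
    (h : ∫ x, |f x| ^ p ∂μ = 0) : f =ᵐ[μ] 0 := by
  have hae := (integral_eq_zero_iff_of_nonneg (fun x => by positivity) hint).mp h
  filter_upwards [hae] with x hx
  have : |f x| = 0 := ((Real.rpow_eq_zero_iff_of_nonneg (abs_nonneg _)).mp hx).1
  simpa using this

theorem stmt_12_general (N : ℕ) (hN : 3 ≤ N)
    (u v : EuclideanSpace ℝ (Fin N) → ℝ)
    (a₁ μ₁ μ₂ β p q r₁ r₂ r γp γq γr : ℝ)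
    (ha₁ : 0 < a₁) (hμ₁ : 0 < μ₁) (hμ₂ : 0 < μ₂) (hβ : 0 < β)
    (hpl : 2 + 4 / N < p)
    (hql : 2 + 4 / N < q)
    (hrl : 2 + 4 / N < r)
    (hγp : γp = (N : ℝ) * (p - 2) / (2 * p))
    (hγq : γq = (N : ℝ) * (q - 2) / (2 * q))
    (hγr : γr = (N : ℝ) * (r - 2) / (2 * r))
    (hintp : Integrable (fun x => |u x| ^ p))
    (hu2 : (∫ x, (u x) ^ 2) = a₁ ^ 2)
    (hP : (∫ x, ‖fderiv ℝ u x‖ ^ 2) + (∫ x, ‖fderiv ℝ v x‖ ^ 2) =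
      γp * μ₁ * (∫ x, |u x| ^ p) + γq * μ₂ * (∫ x, |v x| ^ q)
        + r * γr * β * (∫ x, |u x| ^ r₁ * |v x| ^ r₂))
    (hsec : 2 * ((∫ x, ‖fderiv ℝ u x‖ ^ 2) + ∫ x, ‖fderiv ℝ v x‖ ^ 2) =
      p * γp ^ 2 * μ₁ * (∫ x, |u x| ^ p) + q * γq ^ 2 * μ₂ * (∫ x, |v x| ^ q)
        + (r * γr) ^ 2 * β * (∫ x, |u x| ^ r₁ * |v x| ^ r₂)) :
    ((p * γp - 2) * γp * μ₁ * (∫ x, |u x| ^ p)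
      + (q * γq - 2) * γq * μ₂ * (∫ x, |v x| ^ q)
      + (r * γr - 2) * r * γr * β * (∫ x, |u x| ^ r₁ * |v x| ^ r₂) = 0) ∧
    (∫ x, |u x| ^ p) = 0 ∧ (∫ x, |v x| ^ q) = 0 ∧ False := by
  have hN0 : (0 : ℝ) < N := by exact_mod_cast (by omega : 0 < N)
  have hkey : (p * γp - 2) * γp * μ₁ * (∫ x, |u x| ^ p)
      + (q * γq - 2) * γq * μ₂ * (∫ x, |v x| ^ q)
      + (r * γr - 2) * r * γr * β * (∫ x, |u x| ^ r₁ * |v x| ^ r₂) = 0 := by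
    linear_combination 2 * hP - hsec
  have hr0 : 0 < r := by linarith [show 0 < 4 / (N : ℝ) by positivity]
  have hA : ∫ x, |u x| ^ p = 0 := by
    have hp := two_lt_mul_pohozaevExponent hN0 hpl hγp
    have hq := two_lt_mul_pohozaevExponent hN0 hql hγq
    have hr := two_lt_mul_pohozaevExponent hN0 hrl hγr
    have hγp0 := pohozaevExponent_pos hN0 hpl hγp
    have hγq0 := pohozaevExponent_pos hN0 hql hγq
    have hγr0 := pohozaevExponent_pos hN0 hrl hγr
    refine eq_zero_of_weighted_sum_eq_zero ?_ ?_ ?_ (by positivity) (by positivity)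
      (by positivity) hkey
    · exact mul_pos (mul_pos (by linarith) hγp0) hμ₁
    · exact (mul_pos (mul_pos (by linarith) hγq0) hμ₂).le
    · exact (mul_pos (mul_pos (mul_pos (by linarith) hr0) hγr0) hβ).le
  have hu0 : ∫ x, (u x) ^ 2 = 0 := integral_eq_zero_of_ae <|
    (ae_eq_zero_of_integral_abs_rpow_eq_zero hintp hA).mono fun x hx => by simp [hx]
  exact absurd (hu2 ▸ hu0) (pow_pos ha₁ 2).ne'

theorem stmt_12 (N : ℕ) (hN : 3 ≤ N)
    (u v : EuclideanSpace ℝ (Fin N) → ℝ) (hu : Continuous u) (hv : Continuous v)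
    (a₁ a₂ μ₁ μ₂ β p q r₁ r₂ r γp γq γr : ℝ)
    (ha₁ : 0 < a₁) (ha₂ : 0 < a₂) (hμ₁ : 0 < μ₁) (hμ₂ : 0 < μ₂) (hβ : 0 < β)
    (hpl : 2 + 4 / N < p) (hpu : p < 2 * N / ((N : ℝ) - 2))
    (hql : 2 + 4 / N < q) (hqu : q < 2 * N / ((N : ℝ) - 2))
    (hr : r = r₁ + r₂) (hr1 : 1 < r₁) (hr2 : 1 < r₂)
    (hrl : 2 + 4 / N < r) (hru : r < 2 * N / ((N : ℝ) - 2))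
    (hγp : γp = (N : ℝ) * (p - 2) / (2 * p))
    (hγq : γq = (N : ℝ) * (q - 2) / (2 * q))
    (hγr : γr = (N : ℝ) * (r - 2) / (2 * r))
    (hintp : Integrable (fun x => |u x| ^ p))
    (hintq : Integrable (fun x => |v x| ^ q))
    (hintr : Integrable (fun x => |u x| ^ r₁ * |v x| ^ r₂))
    (hint2u : Integrable (fun x => (u x) ^ 2))
    (hint2v : Integrable (fun x => (v x) ^ 2))
    (hu2 : (∫ x, (u x) ^ 2) = a₁ ^ 2) (hv2 : (∫ x, (v x) ^ 2) = a₂ ^ 2)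
    (hP : (∫ x, ‖fderiv ℝ u x‖ ^ 2) + (∫ x, ‖fderiv ℝ v x‖ ^ 2) =
      γp * μ₁ * (∫ x, |u x| ^ p) + γq * μ₂ * (∫ x, |v x| ^ q)
        + r * γr * β * (∫ x, |u x| ^ r₁ * |v x| ^ r₂))
    (hsec : 2 * ((∫ x, ‖fderiv ℝ u x‖ ^ 2) + ∫ x, ‖fderiv ℝ v x‖ ^ 2) =
      p * γp ^ 2 * μ₁ * (∫ x, |u x| ^ p) + q * γq ^ 2 * μ₂ * (∫ x, |v x| ^ q)
        + (r * γr) ^ 2 * β * (∫ x, |u x| ^ r₁ * |v x| ^ r₂)) :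
    ((p * γp - 2) * γp * μ₁ * (∫ x, |u x| ^ p)
      + (q * γq - 2) * γq * μ₂ * (∫ x, |v x| ^ q)
      + (r * γr - 2) * r * γr * β * (∫ x, |u x| ^ r₁ * |v x| ^ r₂) = 0) ∧
    (∫ x, |u x| ^ p) = 0 ∧ (∫ x, |v x| ^ q) = 0 ∧ False :=
  stmt_12_general N hN u v a₁ μ₁ μ₂ β p q r₁ r₂ r γp γq γr ha₁ hμ₁ hμ₂ hβ hpl hql hrl hγp hγq hγr
    hintp hu2 hP hsec
end
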